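/- arXiv:1807.10329 — 2 statements merged into one kernel-verified Lean document; each statement's English description precedes it below -/
import Mathlib

section
/- Let θ and θ' = θ + a be connections on a principal G-bundle P, with a a 1-form valued in the adjoint bundle. Then the 3-form CS(θ') - CS(θ) - d c(θ' ∧ θ) on the total space of P is basic, and equals the pullback of the 3-form 2c(a ∧ F_θ) + c(a ∧ d^θ a) + \frac{1}{3}c(a,[a,a]) on the base M. -/
/-!
STATEMENT 4.  Let `θ` and `θ' = θ + a` be connections on a principal
`G`-bundle `P`, with `a = θ' - θ ∈ Ω¹(ad P)`.  Then the 3-form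
`CS(θ') - CS(θ) - d c(θ' ∧ θ)` on the total space of `P` is basic, and equals
the pullback of the 3-form `2c(a ∧ F_θ) + c(a ∧ d^θ a) + ⅓ c(a,[a,a])` on the
base `M`.

Abstract model as in Statement 3: `S`, `A` are the scalar and `𝔤`-valued
forms on the total space of `P`, `SM` the forms on the base `M`, and
`pull = p^*`.  "Basic" means lying in the image of `p^*`; `d^θ a = da + [θ∧a]`.
-/

theorem stmt_4
    (S A SM : Type*) [AddCommGroup S] [Module ℝ S] [AddCommGroup A] [Module ℝ A]
    [AddCommGroup SM] [Module ℝ SM]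
    (d : S →ₗ[ℝ] S) (dA : A →ₗ[ℝ] A)
    (c : A →ₗ[ℝ] A →ₗ[ℝ] S) (br : A →ₗ[ℝ] A →ₗ[ℝ] A)
    (deg : A → ℕ → Prop)
    (pull : SM →ₗ[ℝ] S)                       -- p^* : Ω(M) → Ω(P)
    (basicS : S → Prop) (basicA : A → Prop)   -- basic scalar / ad P-valued forms
    (hbasic_iff : ∀ s, basicS s ↔ ∃ t : SM, pull t = s)
    -- standard graded-calculus hypotheses
    (hd2 : ∀ s, d (d s) = 0)
    (hdA2 : ∀ a, dA (dA a) = 0)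
    (hdeg_dA : ∀ a k, deg a k → deg (dA a) (k+1))
    (hdeg_br : ∀ a b k l, deg a k → deg b l → deg (br a b) (k+l))
    (hLeib_c : ∀ a b k, deg a k →
      d (c a b) = c (dA a) b + ((-1 : ℝ))^k • c a (dA b))
    (hLeib_br : ∀ a b k, deg a k →
      dA (br a b) = br (dA a) b + ((-1 : ℝ))^k • br a (dA b))
    (hc_symm : ∀ a b k l, deg a k → deg b l → c a b = ((-1 : ℝ))^(k*l) • c b a)
    (hbr_symm : ∀ a b k l, deg a k → deg b l →
      br a b + ((-1 : ℝ))^(k*l) • br b a = 0)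
    (hinv : ∀ a b e k l, deg a k → deg b l →
      c a (br b e) + ((-1 : ℝ))^(k*l) • c (br b a) e = 0)
    -- behaviour of basic forms
    (hbasic_c : ∀ x y, basicA x → basicA y → basicS (c x y))
    (hbasic_br : ∀ x y, basicA x → basicA y → basicA (br x y))
    (hbasic_add : ∀ s t, basicS s → basicS t → basicS (s + t))
    (hbasic_smul : ∀ (r : ℝ) s, basicS s → basicS (r • s))
    -- the two connections
    (θ θ' : A) (hθ : deg θ 1) (hθ' : deg θ' 1)
    -- the difference of two connections is tensorial (basic), as are the
    -- curvature and the covariant derivative of a tensorial form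
    (htens : basicA (θ' - θ))
    (hcurv_basic : basicA (dA θ + (1/2 : ℝ) • br θ θ))
    (hcov_basic : ∀ x, basicA x → basicA (dA x + br θ x)) :
    -- CS(θ') - CS(θ) - d c(θ' ∧ θ) is basic and equals the pullback of
    -- 2c(a∧F_θ) + c(a∧d^θa) + ⅓c(a,[a,a]),  a := θ' - θ
    basicS ((-(1/6 : ℝ) • c θ' (br θ' θ') + c (dA θ' + (1/2 : ℝ) • br θ' θ') θ')
        - (-(1/6 : ℝ) • c θ (br θ θ) + c (dA θ + (1/2 : ℝ) • br θ θ) θ)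
        - d (c θ' θ)) ∧
    ((-(1/6 : ℝ) • c θ' (br θ' θ') + c (dA θ' + (1/2 : ℝ) • br θ' θ') θ')
        - (-(1/6 : ℝ) • c θ (br θ θ) + c (dA θ + (1/2 : ℝ) • br θ θ) θ)
        - d (c θ' θ))
      = (2 : ℝ) • c (θ' - θ) (dA θ + (1/2 : ℝ) • br θ θ)
        + c (θ' - θ) (dA (θ' - θ) + br θ (θ' - θ))
        + (1/3 : ℝ) • c (θ' - θ) (br (θ' - θ) (θ' - θ)) := by
  -- auxiliary degree facts
  have hdθ : deg (dA θ) 2 := hdeg_dA θ 1 hθ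
  have hdθ' : deg (dA θ') 2 := hdeg_dA θ' 1 hθ'
  have hbθθ : deg (br θ θ) 2 := hdeg_br θ θ 1 1 hθ hθ
  have hbθθ' : deg (br θ θ') 2 := hdeg_br θ θ' 1 1 hθ hθ'
  have hbθ'θ' : deg (br θ' θ') 2 := hdeg_br θ' θ' 1 1 hθ' hθ'
  -- bracket of two 1-forms is symmetric
  have hbb : br θ' θ = br θ θ' := by
    have h := hbr_symm θ' θ 1 1 hθ' hθ
    rw [show ((-1:ℝ))^(1*1) = -1 from by norm_num, neg_one_smul, add_neg_eq_zero] at h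
    exact h
  -- c-symmetry lemmas (degree 2 against degree 1: no sign)
  have r1 : c (dA θ') θ' = c θ' (dA θ') := by
    have h := hc_symm (dA θ') θ' 2 1 hdθ' hθ'
    rw [show ((-1:ℝ))^(2*1) = 1 from by norm_num, one_smul] at h; exact h
  have r2 : c (dA θ) θ = c θ (dA θ) := by
    have h := hc_symm (dA θ) θ 2 1 hdθ hθ
    rw [show ((-1:ℝ))^(2*1) = 1 from by norm_num, one_smul] at h; exact h
  have r3 : c (dA θ') θ = c θ (dA θ') := by
    have h := hc_symm (dA θ') θ 2 1 hdθ' hθ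
    rw [show ((-1:ℝ))^(2*1) = 1 from by norm_num, one_smul] at h; exact h
  have r4 : c (br θ' θ') θ' = c θ' (br θ' θ') := by
    have h := hc_symm (br θ' θ') θ' 2 1 hbθ'θ' hθ'
    rw [show ((-1:ℝ))^(2*1) = 1 from by norm_num, one_smul] at h; exact h
  have r5 : c (br θ θ) θ = c θ (br θ θ) := by
    have h := hc_symm (br θ θ) θ 2 1 hbθθ hθ
    rw [show ((-1:ℝ))^(2*1) = 1 from by norm_num, one_smul] at h; exact h
  have rsym : c (br θ θ') θ = c θ (br θ θ') := by
    have h := hc_symm (br θ θ') θ 2 1 hbθθ' hθ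
    rw [show ((-1:ℝ))^(2*1) = 1 from by norm_num, one_smul] at h; exact h
  have rsym' : c (br θ θ') θ' = c θ' (br θ θ') := by
    have h := hc_symm (br θ θ') θ' 2 1 hbθθ' hθ'
    rw [show ((-1:ℝ))^(2*1) = 1 from by norm_num, one_smul] at h; exact h
  -- invariance consequences
  have r6 : c θ' (br θ θ) = c θ (br θ θ') := by
    have h := hinv θ' θ θ 1 1 hθ' hθ
    rw [show ((-1:ℝ))^(1*1) = -1 from by norm_num, neg_one_smul, add_neg_eq_zero] at h
    rw [h, rsym]
  have r7 : c θ (br θ' θ') = c θ' (br θ θ') := by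
    have h := hinv θ θ' θ' 1 1 hθ hθ'
    rw [show ((-1:ℝ))^(1*1) = -1 from by norm_num, neg_one_smul, add_neg_eq_zero] at h
    rw [h, hbb, rsym']
  -- Leibniz for the cross term
  have rL : d (c θ' θ) = c θ (dA θ') - c θ' (dA θ) := by
    have h := hLeib_c θ' θ 1 hθ'
    rw [show ((-1:ℝ))^(1:ℕ) = -1 from by norm_num, neg_one_smul, r3] at h
    rw [h]; abel
  -- the main algebraic identity
  have key : ((-(1/6 : ℝ) • c θ' (br θ' θ') + c (dA θ' + (1/2 : ℝ) • br θ' θ') θ')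
        - (-(1/6 : ℝ) • c θ (br θ θ) + c (dA θ + (1/2 : ℝ) • br θ θ) θ)
        - d (c θ' θ))
      = (2 : ℝ) • c (θ' - θ) (dA θ + (1/2 : ℝ) • br θ θ)
        + c (θ' - θ) (dA (θ' - θ) + br θ (θ' - θ))
        + (1/3 : ℝ) • c (θ' - θ) (br (θ' - θ) (θ' - θ)) := by
    rw [rL]
    simp only [map_add, map_sub, map_smul, LinearMap.add_apply, LinearMap.sub_apply,
      LinearMap.smul_apply]
    rw [hbb, r1, r2, r4, r5, r6, r7]
    module
  refine ⟨?_, key⟩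
  rw [key]
  have ha : basicA (θ' - θ) := htens
  apply hbasic_add
  apply hbasic_add
  · exact hbasic_smul _ _ (hbasic_c _ _ ha hcurv_basic)
  · exact hbasic_c _ _ ha (hcov_basic _ ha)
  · exact hbasic_smul _ _ (hbasic_c _ _ ha (hbasic_br _ _ ha ha))
end

section
/- Let (L_Q^•, d_Q, [·,·]) be the DGLA above associated to (H,θ) with dH + c(F∧F) = 0. An element (α,b) ∈ L_Q^1 satisfies the Maurer–Cartan equation d_Q(α,b) + \frac{1}{2}[(α,b),(α,b)] = 0 if and only if ∂̄^θα + \frac{1}{2}[α,α] = 0 and d(H-b) + c(F_{θ+α} ∧ F_{θ+α}) = 0, where F_{θ+α} = F + ∂^θα is the curvature of θ+α. In particular (H-b, θ+α) defines a new string algebroid. -/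
/-!
STATEMENT 15.  Let `(L_Q^•, d_Q, [·,·])` be the DGLA associated to `(H,θ)`
with `dH + c(F∧F) = 0`.  An element `(α,b) ∈ L_Q^1` satisfies the
Maurer–Cartan equation `d_Q(α,b) + ½[(α,b),(α,b)] = 0` if and only if
`∂̄^θα + ½[α,α] = 0` and `d(H-b) + c(F_{θ+α} ∧ F_{θ+α}) = 0`, where
`F_{θ+α} = F + ∂^θα` is the curvature of `θ+α`.  In particular
`(H-b, θ+α)` defines a new string algebroid.

Abstract model as in Statement 14: `V = Ω^{0,1}(ad P)`-type elements inside
the carrier `V`, `V1 ⊇ Ω^{1,•}(ad P)` containing the curvature `F`,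
`W = Ω^{≤•}` containing `H`; `dbV = ∂̄^θ`, `p = ∂^θ`, `br` the bracket,
`cp = c(·∧·)`, `dW = d`.  Hypotheses: the integrability `dW H + cp F F = 0`
and symmetry of the pairing on the relevant (even-degree) forms.
-/

theorem stmt_15
    (V V1 W : Type*) [AddCommGroup V] [Module ℂ V] [AddCommGroup V1]
    [Module ℂ V1] [AddCommGroup W] [Module ℂ W]
    (dbV : V →ₗ[ℂ] V)            -- ∂̄^θ
    (p : V →ₗ[ℂ] V1)             -- ∂^θ
    (br : V →ₗ[ℂ] V →ₗ[ℂ] V)     -- [·,·]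
    (cp : V1 →ₗ[ℂ] V1 →ₗ[ℂ] W)   -- c(·∧·)
    (dW : W →ₗ[ℂ] W)             -- d
    (F : V1)                      -- the curvature F_θ (type (1,1))
    (H : W)                       -- H ∈ Ω^{3,0} ⊕ Ω^{2,1}
    -- context hypotheses
    (hInt : dW H + cp F F = 0)                              -- dH + c(F∧F) = 0
    (hsym : ∀ x y : V1, cp x y = cp y x) :                  -- on even-degree forms
    ∀ (α : V) (b : W),
      -- the Maurer–Cartan equation d_Q(α,b) + ½[(α,b),(α,b)] = 0
      ((dbV α, dW b - (2 : ℂ) • cp (p α) F)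
          + (1/2 : ℂ) • ((br α α, ((-1 : ℂ)) • ((2 : ℂ) • cp (p α) (p α))))
        = ((0 : V), (0 : W)))
      ↔
      -- integrability of θ^{0,1} + α  and  d(H-b) + c(F_{θ+α} ∧ F_{θ+α}) = 0,
      -- with F_{θ+α} = F + ∂^θα
      ((dbV α + (1/2 : ℂ) • br α α = 0) ∧
        (dW (H - b) + cp (F + p α) (F + p α) = 0)) := by
  intro α b
  simp only [Prod.mk_add_mk, Prod.smul_mk, Prod.mk.injEq]
  constructor
  · rintro ⟨h1, h2⟩
    refine ⟨h1, ?_⟩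
    have h2' : dW b - (2:ℂ) • cp (p α) F - cp (p α) (p α) = 0 := by
      rw [← h2]; module
    simp only [map_sub, map_add, LinearMap.add_apply]
    rw [hsym F (p α)]
    have := hInt
    linear_combination (norm := module) hInt - h2'
  · rintro ⟨h1, h2⟩
    constructor
    · exact h1
    · simp only [map_sub, map_add, LinearMap.add_apply] at h2
      rw [hsym F (p α)] at h2
      linear_combination (norm := module) hInt - h2
end
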